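/- arXiv:1504.06558 — 3 statements merged into one kernel-verified Lean document; each statement's English description precedes it below -/
import Mathlib

section
/- Let P = {p_k : k ≥ 1} be a probability distribution on a countable alphabet. Then the effective cardinality K = #{k : p_k > 0} is finite if and only if there exist a constant q_0 ∈ (0,1) and a constant C > 0 such that t_n ≤ C · n · q_0^n for all n; in particular, when K is finite, t_n → 0 exponentially fast. -/
open Filter Topology

/-- The tail index `t_n = n * ∑_k p_k (1 - p_k)^n`. -/
noncomputable def tailIndex (p : ℕ → ℝ) (n : ℕ) : ℝ :=
  (n : ℝ) * ∑' k, p k * (1 - p k) ^ n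

/-!
If the support is finite, every positive `p k` is at least some `ε ∈ (0, 1)`, so each factor
`(1 - p k)ⁿ` is at most `(1 - ε)ⁿ` and `t_n ≤ n (1 - ε)ⁿ`. Conversely, a single term gives
`p k (1 - p k)ⁿ ≤ t_n / n ≤ C q₀ⁿ` for every `n`, which forces `1 - p k ≤ q₀`; so every positive
`p k` is at least `1 - q₀ > 0`, and since `p k → 0` only finitely many of them can be positive.
-/

lemma le_of_eventually_mul_pow_le {a r s C : ℝ} (ha : 0 < a) (hs : 0 < s)
    (h : ∀ᶠ n in atTop, a * r ^ n ≤ C * s ^ n) : r ≤ s := by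
  by_contra! hsr
  have hgrowth : Tendsto (fun n : ℕ => (r / s) ^ n) atTop atTop :=
    tendsto_pow_atTop_atTop_of_one_lt ((one_lt_div hs).mpr hsr)
  obtain ⟨n, hbig, hn⟩ := ((hgrowth.eventually_gt_atTop (C / a)).and h).exists
  have hbounded : a * (r / s) ^ n ≤ C := by
    rwa [div_pow, ← mul_div_assoc, div_le_iff₀ (pow_pos hs n)]
  rw [div_lt_iff₀ ha] at hbig
  linarith

lemma Set.Finite.exists_mem_Ioo_forall_le {ι : Type*} {S : Set ι} (hS : S.Finite) {f : ι → ℝ}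
    (hf : ∀ k ∈ S, 0 < f k) : ∃ ε ∈ Set.Ioo (0 : ℝ) 1, ∀ k ∈ S, ε ≤ f k := by
  have hsmall : ∀ᶠ ε in 𝓝[>] (0 : ℝ), ε < 1 ∧ ∀ k ∈ S, ε ≤ f k :=
    (eventually_nhdsWithin_of_eventually_nhds (gt_mem_nhds one_pos)).and <|
      (eventually_all_finite hS).mpr fun k hk =>
        eventually_nhdsWithin_of_eventually_nhds (ge_mem_nhds (hf k hk))
  obtain ⟨ε, ⟨hε1, hεS⟩, hε0⟩ := (hsmall.and self_mem_nhdsWithin).exists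
  exact ⟨ε, ⟨hε0, hε1⟩, hεS⟩

section ProbabilityVector

variable {ι : Type*} {p : ι → ℝ}

lemma summable_of_tsum_eq_one (hsum : ∑' k, p k = 1) : Summable p := by
  by_contra h
  simp [tsum_eq_zero_of_not_summable h] at hsum

variable (hp : ∀ k, 0 ≤ p k) (hsum : ∑' k, p k = 1)
include hp hsum

lemma le_one_of_tsum_eq_one (k : ι) : p k ≤ 1 :=
  hsum ▸ (summable_of_tsum_eq_one hsum).le_tsum k fun j _ => hp j

lemma mul_one_sub_pow_nonneg (n : ℕ) (k : ι) : 0 ≤ p k * (1 - p k) ^ n :=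
  mul_nonneg (hp k) (pow_nonneg (sub_nonneg.mpr (le_one_of_tsum_eq_one hp hsum k)) n)

lemma summable_mul_one_sub_pow (n : ℕ) : Summable fun k => p k * (1 - p k) ^ n := by
  refine (summable_of_tsum_eq_one hsum).of_nonneg_of_le (mul_one_sub_pow_nonneg hp hsum n)
    fun k => mul_le_of_le_one_right (hp k) ?_
  exact pow_le_one₀ (sub_nonneg.mpr (le_one_of_tsum_eq_one hp hsum k)) (by linarith [hp k])

lemma mul_one_sub_pow_le_tsum (n : ℕ) (k : ι) :
    p k * (1 - p k) ^ n ≤ ∑' j, p j * (1 - p j) ^ n :=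
  (summable_mul_one_sub_pow hp hsum n).le_tsum k fun j _ => mul_one_sub_pow_nonneg hp hsum n j

lemma tsum_mul_one_sub_pow_le {ε : ℝ} (hε : ∀ k, 0 < p k → ε ≤ p k) (n : ℕ) :
    ∑' k, p k * (1 - p k) ^ n ≤ (1 - ε) ^ n := by
  have hterm : ∀ k, p k * (1 - p k) ^ n ≤ p k * (1 - ε) ^ n := by
    intro k
    rcases (hp k).eq_or_lt with hk | hk
    · simp [← hk]
    · have hk1 := le_one_of_tsum_eq_one hp hsum k
      exact mul_le_mul_of_nonneg_left
        (pow_le_pow_left₀ (by linarith) (by linarith [hε k hk]) n) (hp k)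
  calc ∑' k, p k * (1 - p k) ^ n ≤ ∑' k, p k * (1 - ε) ^ n :=
        (summable_mul_one_sub_pow hp hsum n).tsum_le_tsum hterm
          ((summable_of_tsum_eq_one hsum).mul_right _)
    _ = (1 - ε) ^ n := by rw [tsum_mul_right, hsum, one_mul]

end ProbabilityVector

/-- The effective cardinality `K = #{k : p_k > 0}` is finite if and only if
`t_n ≤ C · n · q₀ⁿ` for all `n ≥ 1`, for some constants `q₀ ∈ (0,1)` and `C > 0`;
in particular `t_n → 0` exponentially fast when `K` is finite. -/
theorem stmt3 (p : ℕ → ℝ) (hp : ∀ k, 0 ≤ p k) (hsum : ∑' k, p k = 1) :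
    {k | 0 < p k}.Finite ↔
      ∃ q₀ C : ℝ, q₀ ∈ Set.Ioo (0 : ℝ) 1 ∧ 0 < C ∧
        ∀ n : ℕ, 1 ≤ n → tailIndex p n ≤ C * n * q₀ ^ n := by
  constructor
  · intro hfin
    obtain ⟨ε, ⟨hε0, hε1⟩, hε⟩ := hfin.exists_mem_Ioo_forall_le fun k hk => hk
    refine ⟨1 - ε, 1, ⟨by linarith, by linarith⟩, one_pos, fun n _ => ?_⟩
    rw [tailIndex, one_mul]
    exact mul_le_mul_of_nonneg_left (tsum_mul_one_sub_pow_le hp hsum hε n) n.cast_nonneg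
  · rintro ⟨q₀, C, ⟨hq₀, hq₁⟩, -, hbound⟩
    have hgap : ∀ k, 0 < p k → 1 - q₀ ≤ p k := by
      intro k hk
      suffices 1 - p k ≤ q₀ by linarith
      refine le_of_eventually_mul_pow_le (C := C) hk hq₀ (eventually_atTop.mpr ⟨1, fun n hn => ?_⟩)
      have hn0 : (0 : ℝ) < n := by exact_mod_cast hn
      have hterm := mul_le_mul_of_nonneg_left (mul_one_sub_pow_le_tsum hp hsum n k) hn0.le
      rw [← tailIndex] at hterm
      exact le_of_mul_le_mul_left (by linarith [hbound n hn]) hn0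
    have hlarge : {k | 1 - q₀ ≤ p k}.Finite := by
      simpa using (summable_of_tsum_eq_one hsum).tendsto_cofinite_zero.eventually
        (gt_mem_nhds (sub_pos.mpr hq₁))
    exact hlarge.subset hgap
end

section
/- Let P = {p_i : i ≥ 1} and Q = {q_k : k ≥ 1} be two probability distributions on a countably infinite alphabet, each with all probabilities positive, with Q non-increasing. If Q belongs to Domain 1 and Q dominates P, then P belongs to Domain 1. -/
/-!
Write `t_n(P) = ∑ᵢ g_n(pᵢ)` with `g_n(x) = n x (1 - x)^n` (`tailTerm n x`). Then `g_n`
increases on `[0, 1/(n+1)]`, decreases on `[1/(n+1), 1]` and is at most `1`. Hence a letter with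
`q_{k+1} < pᵢ ≤ q_k` has `g_n(pᵢ) ≤ g_n(q_{k+1}) + g_n(q_k)`, except on the one bracket
containing `1/(n+1)`, where `g_n(pᵢ) ≤ 1`. Domination allows at most `M` letters per bracket and
only finitely many letters exceed `q_0`, so `t_n(P) ≤ C + M (2 t_n(Q) + 1)` and `limsup t_n(P)` is
finite. It is positive for every distribution with infinitely many positive masses: a letter with
small `pᵢ` alone gives `g_n(pᵢ) ≥ 1/8` at `n = ⌈1/(2pᵢ)⌉`.
-/

open Filter Topology

/-- `P` belongs to Domain 1: `limsup t_n` is a finite positive constant. -/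
noncomputable def InDomain1 (p : ℕ → ℝ) : Prop :=
  ∃ c : ℝ, 0 < c ∧
    Filter.limsup (fun n : ℕ => ((tailIndex p n : ℝ) : EReal)) atTop = (c : EReal)

/-- A non-increasing distribution `Q` dominates `P` if there is a finite positive integer
`M` such that `#{i : q_{k+1} < p_i ≤ q_k} ≤ M` for every `k`. -/
def Dominates (q p : ℕ → ℝ) : Prop :=
  ∃ M : ℕ, 0 < M ∧ ∀ k : ℕ, {i : ℕ | q (k + 1) < p i ∧ p i ≤ q k}.encard ≤ (M : ℕ∞)

open Set

noncomputable def tailTerm (n : ℕ) (x : ℝ) : ℝ :=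
  (n : ℝ) * (x * (1 - x) ^ n)

lemma tailIndex_eq_tsum (p : ℕ → ℝ) (n : ℕ) : tailIndex p n = ∑' k, tailTerm n (p k) :=
  tsum_mul_left.symm

section tailTerm

variable {n : ℕ} {x : ℝ}

lemma tailTerm_nonneg (hx0 : 0 ≤ x) (hx1 : x ≤ 1) : 0 ≤ tailTerm n x := by
  have : 0 ≤ 1 - x := by linarith
  unfold tailTerm
  positivity

lemma tailTerm_le_mul (hx0 : 0 ≤ x) (hx1 : x ≤ 1) : tailTerm n x ≤ n * x := by
  have : (1 - x) ^ n ≤ 1 := pow_le_one₀ (by linarith) (by linarith)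
  unfold tailTerm
  gcongr
  nlinarith

lemma tailTerm_le_one (hx0 : 0 ≤ x) (hx1 : x ≤ 1) : tailTerm n x ≤ 1 := by
  have hbernoulli : 1 + n * x ≤ (1 + x) ^ n := one_add_mul_le_pow (by linarith) n
  have : 0 ≤ 1 - x := by linarith
  calc tailTerm n x = (n * x) * (1 - x) ^ n := by unfold tailTerm; ring
    _ ≤ (1 + x) ^ n * (1 - x) ^ n := by gcongr; linarith
    _ = (1 - x ^ 2) ^ n := by rw [← mul_pow]; ring
    _ ≤ 1 := pow_le_one₀ (by nlinarith) (by nlinarith)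

lemma hasDerivAt_tailTerm_succ (n : ℕ) (x : ℝ) :
    HasDerivAt (tailTerm (n + 1)) ((n + 1) * (1 - x) ^ n * (1 - (n + 2) * x)) x := by
  have h := ((hasDerivAt_id' x).fun_mul
    (((hasDerivAt_id' x).const_sub 1).fun_pow (n + 1))).const_mul ((n : ℝ) + 1)
  have e : tailTerm (n + 1) = fun y => ((n : ℝ) + 1) * (y * (1 - y) ^ (n + 1)) := by
    funext y; simp [tailTerm]
  rw [e]
  exact h.congr_deriv (by push_cast [Nat.add_sub_cancel]; ring)

lemma tailTerm_monotoneOn : MonotoneOn (tailTerm n) (Icc 0 (1 / (n + 1))) := by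
  cases n with
  | zero => exact fun _ _ _ _ _ => by simp [tailTerm]
  | succ n =>
    refine monotoneOn_of_hasDerivWithinAt_nonneg (convex_Icc _ _)
      (fun x _ => (hasDerivAt_tailTerm_succ n x).continuousAt.continuousWithinAt)
      (fun x _ => (hasDerivAt_tailTerm_succ n x).hasDerivWithinAt) fun x hx => ?_
    rw [interior_Icc, mem_Ioo, lt_div_iff₀ (by positivity)] at hx
    push_cast at hx
    have : 0 ≤ 1 - x := by nlinarith
    have : 0 ≤ 1 - (n + 2) * x := by linarith
    positivity

lemma tailTerm_antitoneOn : AntitoneOn (tailTerm n) (Icc (1 / (n + 1)) 1) := by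
  cases n with
  | zero => exact fun _ _ _ _ _ => by simp [tailTerm]
  | succ n =>
    refine antitoneOn_of_hasDerivWithinAt_nonpos (convex_Icc _ _)
      (fun x _ => (hasDerivAt_tailTerm_succ n x).continuousAt.continuousWithinAt)
      (fun x _ => (hasDerivAt_tailTerm_succ n x).hasDerivWithinAt) fun x hx => ?_
    rw [interior_Icc, mem_Ioo, div_lt_iff₀ (by positivity)] at hx
    push_cast at hx
    have : 0 ≤ 1 - x := by linarith
    exact mul_nonpos_of_nonneg_of_nonpos (by positivity) (by linarith)

lemma tailTerm_le_of_mem_Icc {a b : ℝ} (hx : x ∈ Icc a b) (ha : 0 ≤ a) (hb : b ≤ 1) :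
    tailTerm n x ≤
      tailTerm n a + tailTerm n b + if 1 / ((n : ℝ) + 1) ∈ Ioc a b then 1 else 0 := by
  have hx0 : 0 ≤ x := ha.trans hx.1
  have hx1 : x ≤ 1 := hx.2.trans hb
  have hga := tailTerm_nonneg (n := n) ha (hx.1.trans hx1)
  have hgb := tailTerm_nonneg (n := n) (hx0.trans hx.2) hb
  split_ifs with hpeak
  · linarith [tailTerm_le_one (n := n) hx0 hx1]
  · rcases not_and_or.mp hpeak with hle | hlt
    · have := tailTerm_antitoneOn (n := n) ⟨not_lt.mp hle, hx.1.trans hx1⟩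
        ⟨(not_lt.mp hle).trans hx.1, hx1⟩ hx.1
      linarith
    · have := tailTerm_monotoneOn (n := n) ⟨hx0, hx.2.trans (not_le.mp hlt).le⟩
        ⟨hx0.trans hx.2, (not_le.mp hlt).le⟩ hx.2
      linarith

lemma one_eighth_le_tailTerm_ceil (hx0 : 0 < x) (hx : x ≤ 1 / 4) :
    1 / 8 ≤ tailTerm ⌈1 / (2 * x)⌉₊ x := by
  set t := ⌈1 / (2 * x)⌉₊
  have hhalf : 1 / (2 * x) * x = 1 / 2 := by field_simp
  have htx_ge : 1 / 2 ≤ t * x := by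
    rw [← hhalf]; gcongr; exact Nat.le_ceil _
  have htx_le : t * x ≤ 3 / 4 := by
    have : (t : ℝ) < 1 / (2 * x) + 1 := Nat.ceil_lt_add_one (by positivity)
    nlinarith
  have hpow : 1 - t * x ≤ (1 - x) ^ t := by
    simpa [sub_eq_add_neg] using one_add_mul_le_pow (a := -x) (by linarith) t
  calc (1 / 8 : ℝ) ≤ (t * x) * (1 - x) ^ t := by nlinarith
    _ = tailTerm t x := by unfold tailTerm; ring

end tailTerm

lemma summable_of_tsum_eq_one_s11 {ι : Type*} {p : ι → ℝ} (h : ∑' i, p i = 1) : Summable p := by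
  by_contra hs
  rw [tsum_eq_zero_of_not_summable hs] at h
  exact zero_ne_one h

lemma le_one_of_tsum_eq_one_s11 {ι : Type*} {p : ι → ℝ} (hp : ∀ i, 0 ≤ p i) (h : ∑' i, p i = 1)
    (i : ι) : p i ≤ 1 :=
  h ▸ (summable_of_tsum_eq_one_s11 h).le_tsum i fun j _ => hp j

lemma exists_pos_limsup_coe_eq {ι : Type*} {l : Filter ι} {u : ι → ℝ} {a B : ℝ} (ha : 0 < a)
    (hfreq : ∃ᶠ n in l, a ≤ u n) (hev : ∀ᶠ n in l, u n ≤ B) :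
    ∃ c : ℝ, 0 < c ∧ limsup (fun n => (u n : EReal)) l = c := by
  set L := limsup (fun n => (u n : EReal)) l
  have hub : L ≤ B := limsup_le_of_le (by isBoundedDefault)
    (hev.mono fun n hn => EReal.coe_le_coe_iff.mpr hn)
  have hlb : (a : EReal) ≤ L := le_limsup_of_frequently_le
    (hfreq.mono fun n hn => EReal.coe_le_coe_iff.mpr hn) (by isBoundedDefault)
  have hL : ((L.toReal : ℝ) : EReal) = L :=
    EReal.coe_toReal (hub.trans_lt (EReal.coe_lt_top B)).ne
      ((EReal.bot_lt_coe a).trans_le hlb).ne'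
  refine ⟨L.toReal, ha.trans_le ?_, hL.symm⟩
  exact EReal.coe_le_coe_iff.mp (hL ▸ hlb)

lemma sum_comp_le_mul_sum_image {ι κ R : Type*} [DecidableEq κ] [CommSemiring R] [PartialOrder R]
    [IsOrderedRing R] {s : Finset ι} {f : ι → κ} {w : κ → R} {M : ℕ}
    (hw : ∀ j ∈ s.image f, 0 ≤ w j) (hM : ∀ j ∈ s.image f, (s.filter (f · = j)).card ≤ M) :
    ∑ i ∈ s, w (f i) ≤ M * ∑ j ∈ s.image f, w j := by
  rw [Finset.sum_comp, Finset.mul_sum]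
  refine Finset.sum_le_sum fun j hj => ?_
  rw [nsmul_eq_mul]
  exact mul_le_mul_of_nonneg_right (Nat.mono_cast (hM j hj)) (hw j hj)

lemma sum_ite_mem_Ioc_succ_le_one {β : Type*} [LinearOrder β] {q : ℕ → β} (hq : Antitone q)
    (c : β) (J : Finset ℕ) : ∑ k ∈ J, (if c ∈ Ioc (q (k + 1)) (q k) then (1 : ℝ) else 0) ≤ 1 := by
  rw [Finset.sum_boole, Nat.cast_le_one, Finset.card_le_one]
  intro k hk l hl
  by_contra hkl
  exact Set.disjoint_left.mp (hq.pairwise_disjoint_on_Ioc_succ hkl)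
    (Finset.mem_filter.mp hk).2 (Finset.mem_filter.mp hl).2

lemma exists_lt_succ_and_le {β : Type*} [LinearOrder β] {q : ℕ → β} {x : β} (h0 : x ≤ q 0)
    (h : ∃ k, q k < x) : ∃ k, q (k + 1) < x ∧ x ≤ q k := by
  have hsucc : ∃ k, q (k + 1) < x := by
    obtain ⟨_ | k, hk⟩ := h
    · exact absurd h0 (not_le.mpr hk)
    · exact ⟨k, hk⟩
  refine ⟨Nat.find hsucc, Nat.find_spec hsucc, ?_⟩
  rcases hk : Nat.find hsucc with _ | k
  · exact h0
  · exact not_lt.mp (Nat.find_min hsucc (hk ▸ k.lt_succ_self))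

section distribution

variable {p q : ℕ → ℝ}

lemma summable_tailTerm (hp0 : ∀ i, 0 ≤ p i) (hp1 : ∀ i, p i ≤ 1) (hps : Summable p) (n : ℕ) :
    Summable fun i => tailTerm n (p i) :=
  (hps.mul_left (n : ℝ)).of_nonneg_of_le (fun i => tailTerm_nonneg (hp0 i) (hp1 i))
    fun i => tailTerm_le_mul (hp0 i) (hp1 i)

lemma tailIndex_nonneg (hq0 : ∀ k, 0 ≤ q k) (hq1 : ∀ k, q k ≤ 1) (n : ℕ) :
    0 ≤ tailIndex q n := by
  rw [tailIndex_eq_tsum]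
  exact tsum_nonneg fun k => tailTerm_nonneg (hq0 k) (hq1 k)

lemma sum_tailTerm_le_tailIndex (hq0 : ∀ k, 0 ≤ q k) (hq1 : ∀ k, q k ≤ 1) (hqs : Summable q)
    (n : ℕ) (J : Finset ℕ) : ∑ k ∈ J, tailTerm n (q k) ≤ tailIndex q n := by
  rw [tailIndex_eq_tsum]
  exact (summable_tailTerm hq0 hq1 hqs n).sum_le_tsum J
    fun k _ => tailTerm_nonneg (hq0 k) (hq1 k)

noncomputable def bracketWeight (q : ℕ → ℝ) (n k : ℕ) : ℝ :=
  tailTerm n (q (k + 1)) + tailTerm n (q k) +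
    if 1 / ((n : ℝ) + 1) ∈ Ioc (q (k + 1)) (q k) then 1 else 0

lemma bracketWeight_nonneg (hq0 : ∀ k, 0 ≤ q k) (hq1 : ∀ k, q k ≤ 1) (n k : ℕ) :
    0 ≤ bracketWeight q n k := by
  have := tailTerm_nonneg (n := n) (hq0 (k + 1)) (hq1 (k + 1))
  have := tailTerm_nonneg (n := n) (hq0 k) (hq1 k)
  unfold bracketWeight
  split_ifs <;> linarith

lemma sum_bracketWeight_le (hq0 : ∀ k, 0 ≤ q k) (hq1 : ∀ k, q k ≤ 1) (hqs : Summable q)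
    (hqmono : Antitone q) (n : ℕ) (J : Finset ℕ) :
    ∑ k ∈ J, bracketWeight q n k ≤ 2 * tailIndex q n + 1 := by
  have hshift : ∑ k ∈ J, tailTerm n (q (k + 1)) ≤ tailIndex q n := by
    simpa using sum_tailTerm_le_tailIndex hq0 hq1 hqs n (J.map (addRightEmbedding 1))
  simp only [bracketWeight, Finset.sum_add_distrib]
  linarith [sum_tailTerm_le_tailIndex hq0 hq1 hqs n J,
    sum_ite_mem_Ioc_succ_le_one hqmono (1 / ((n : ℝ) + 1)) J]

lemma frequently_one_eighth_le_tailIndex (hp : ∀ i, 0 < p i) (hp1 : ∀ i, p i ≤ 1)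
    (hps : Summable p) : ∃ᶠ n in atTop, 1 / 8 ≤ tailIndex p n := by
  rw [frequently_atTop]
  intro N
  obtain ⟨i, hi⟩ := (hps.tendsto_atTop_zero.eventually_lt_const
    (show (0 : ℝ) < min (1 / 4) (1 / (2 * ((N : ℝ) + 1))) by positivity)).exists
  have hi4 : p i ≤ 1 / 4 := (hi.trans_le (min_le_left _ _)).le
  have hiN : p i * (2 * (N + 1)) < 1 :=
    (lt_div_iff₀ (by positivity)).mp (hi.trans_le (min_le_right _ _))
  refine ⟨⌈1 / (2 * p i)⌉₊, ?_, ?_⟩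
  · have : (N : ℝ) ≤ 1 / (2 * p i) := by
      rw [le_div_iff₀ (by linarith [hp i])]; nlinarith [hp i]
    exact_mod_cast this.trans (Nat.le_ceil _)
  · rw [tailIndex_eq_tsum]
    exact (one_eighth_le_tailTerm_ceil (hp i) hi4).trans <|
      (summable_tailTerm (fun j => (hp j).le) hp1 hps _).le_tsum i
        fun j _ => tailTerm_nonneg (hp j).le (hp1 j)

lemma sum_tailTerm_le_of_mem_brackets (hq0 : ∀ k, 0 ≤ q k) (hq1 : ∀ k, q k ≤ 1)
    (hqs : Summable q) (hqmono : Antitone q) {M : ℕ}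
    (hdom : ∀ k, {i | q (k + 1) < p i ∧ p i ≤ q k}.encard ≤ M) {G : Finset ℕ} {k : ℕ → ℕ}
    (hk : ∀ i ∈ G, q (k i + 1) < p i ∧ p i ≤ q (k i)) (n : ℕ) :
    ∑ i ∈ G, tailTerm n (p i) ≤ M * (2 * tailIndex q n + 1) := by
  have hfiber : ∀ j ∈ G.image k, (G.filter (k · = j)).card ≤ M := by
    intro j _
    have hsub : ((G.filter (k · = j) : Finset ℕ) : Set ℕ) ⊆ {i | q (j + 1) < p i ∧ p i ≤ q j} := by
      intro i hi
      obtain ⟨hiG, rfl⟩ := Finset.mem_filter.mp hi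
      exact hk i hiG
    have := (Set.encard_mono hsub).trans (hdom j)
    rw [Set.encard_coe_eq_coe_finsetCard] at this
    exact_mod_cast this
  calc ∑ i ∈ G, tailTerm n (p i) ≤ ∑ i ∈ G, bracketWeight q n (k i) :=
        Finset.sum_le_sum fun i hi =>
          tailTerm_le_of_mem_Icc ⟨(hk i hi).1.le, (hk i hi).2⟩ (hq0 _) (hq1 _)
    _ ≤ M * ∑ j ∈ G.image k, bracketWeight q n j :=
        sum_comp_le_mul_sum_image (fun j _ => bracketWeight_nonneg hq0 hq1 n j) hfiber
    _ ≤ M * (2 * tailIndex q n + 1) := by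
        gcongr
        exact sum_bracketWeight_le hq0 hq1 hqs hqmono n _

lemma exists_tailIndex_le_of_dominates (hp : ∀ i, 0 < p i) (hq : ∀ k, 0 < q k)
    (hp1 : ∀ i, p i ≤ 1) (hq1 : ∀ k, q k ≤ 1) (hps : Summable p) (hqs : Summable q)
    (hqmono : Antitone q) {M : ℕ}
    (hdom : ∀ k, {i | q (k + 1) < p i ∧ p i ≤ q k}.encard ≤ M) :
    ∃ C : ℝ, ∀ n, tailIndex p n ≤ C + M * (2 * tailIndex q n + 1) := by
  have hlarge_fin : {i | q 0 < p i}.Finite :=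
    (eventually_cofinite.mp (hps.tendsto_cofinite_zero.eventually_lt_const (hq 0))).subset
      fun i hi => not_lt.mpr hi.le
  choose! k hk using fun i (hi : p i ≤ q 0) =>
    exists_lt_succ_and_le hi (hqs.tendsto_atTop_zero.eventually_lt_const (hp i)).exists
  refine ⟨hlarge_fin.toFinset.card, fun n => ?_⟩
  have htq := tailIndex_nonneg (fun k => (hq k).le) hq1 n
  rw [tailIndex_eq_tsum]
  refine tsum_le_of_sum_le' (by positivity) fun F => ?_
  rw [← Finset.sum_filter_add_sum_filter_not F (q 0 < p ·)]
  have hlarge : ∑ i ∈ F.filter (q 0 < p ·), tailTerm n (p i) ≤ hlarge_fin.toFinset.card :=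
    calc ∑ i ∈ F.filter (q 0 < p ·), tailTerm n (p i) ≤ (F.filter (q 0 < p ·)).card := by
          simpa using Finset.sum_le_card_nsmul _ _ 1 fun i _ => tailTerm_le_one (hp i).le (hp1 i)
      _ ≤ hlarge_fin.toFinset.card := by
          gcongr
          intro i hi
          simpa using (Finset.mem_filter.mp hi).2
  have hsmall := sum_tailTerm_le_of_mem_brackets (fun k => (hq k).le) hq1 hqs hqmono hdom
    (G := F.filter (¬ q 0 < p ·)) (k := k)
    (fun i hi => hk i (not_lt.mp (Finset.mem_filter.mp hi).2)) n
  linarith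

end distribution

/-- If `Q` is in Domain 1 and `Q` dominates `P`, then `P` is in Domain 1. -/
theorem stmt11 (p q : ℕ → ℝ) (hp : ∀ i, 0 < p i) (hq : ∀ k, 0 < q k)
    (hpsum : ∑' i, p i = 1) (hqsum : ∑' k, q k = 1) (hqmono : Antitone q)
    (hQ1 : InDomain1 q) (hdom : Dominates q p) :
    InDomain1 p := by
  obtain ⟨c, -, hlimq⟩ := hQ1
  obtain ⟨M, -, hdomM⟩ := hdom
  have hps := summable_of_tsum_eq_one_s11 hpsum
  have hp1 := le_one_of_tsum_eq_one_s11 (fun i => (hp i).le) hpsum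
  have hq1 := le_one_of_tsum_eq_one_s11 (fun k => (hq k).le) hqsum
  obtain ⟨C, hC⟩ := exists_tailIndex_le_of_dominates hp hq hp1 hq1 hps
    (summable_of_tsum_eq_one_s11 hqsum) hqmono hdomM
  have hq_bdd : ∀ᶠ n in atTop, tailIndex q n < c + 1 := by
    have : limsup (fun n => (tailIndex q n : EReal)) atTop < ((c + 1 : ℝ) : EReal) :=
      hlimq ▸ EReal.coe_lt_coe_iff.mpr (lt_add_one c)
    filter_upwards [eventually_lt_of_limsup_lt this] with n hn using EReal.coe_lt_coe_iff.mp hn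
  refine exists_pos_limsup_coe_eq (by norm_num) (frequently_one_eighth_le_tailIndex hp hp1 hps)
    (B := C + M * (2 * (c + 1) + 1)) ?_
  filter_upwards [hq_bdd] with n hn
  exact (hC n).trans (by gcongr)
end

section
/- Let P = {p_k : k ≥ 1} be a probability distribution on a countably infinite alphabet with all p_k > 0 satisfying, for all k ≥ k_0 for some integer k_0 ≥ 1, either p_k = a e^{−λ k}, or p_k = b e^{−λ k²}, or p_k = c k^{r} e^{−λ k}, where λ > 0, r ∈ (−∞, ∞), a > 0, b > 0 and c > 0 are constants. Then P belongs to Domain 1, i.e., the effective cardinality of P is infinite and t_n is bounded above uniformly in n. -/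
/-!
Each of the three tails eventually decays geometrically, `p (k + 1) ≤ ρ * p k` with `ρ < 1`
(for `c k^r e^{-λk}` because `((k + 1) / k)^r → 1`). Since `(1 - x)^n ≤ e^{-nx}`, the term
`n p_k (1 - p_k)^n` is at most both `n p_k` and `4 / (n p_k)`. Along the geometrically decreasing
sequence `x_k = n p_k`, the terms before the first index with `x_k ≤ 1` are then dominated by a
geometric series running backwards from it and those after it by one running forwards, so
`t_n` is bounded independently of `n`.
-/

open Filter Topology

open Finset Real

lemma one_sub_pow_le_exp_neg_mul {x : ℝ} (hx : x ≤ 1) (n : ℕ) :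
    (1 - x) ^ n ≤ exp (-(n * x)) := by
  rw [← mul_neg, exp_nat_mul]
  exact pow_le_pow_left₀ (by linarith) (one_sub_le_exp_neg x) n

lemma mul_exp_neg_le_one (y : ℝ) : y * exp (-y) ≤ 1 :=
  (mul_exp_neg_le_exp_neg_one y).trans (exp_le_one_iff.mpr (by norm_num))

lemma sq_mul_exp_neg_le_four {y : ℝ} (hy : 0 ≤ y) : y ^ 2 * exp (-y) ≤ 4 := by
  have h : (y / 2 * exp (-(y / 2))) ^ 2 ≤ 1 :=
    pow_le_one₀ (by positivity) (mul_exp_neg_le_one _)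
  have : (y / 2 * exp (-(y / 2))) ^ 2 = y ^ 2 * exp (-y) / 4 := by
    rw [mul_pow, ← exp_nat_mul]; ring_nf
  linarith

section TailTerm

variable {x : ℝ} (hx₀ : 0 ≤ x) (hx₁ : x ≤ 1) (n : ℕ)
include hx₀ hx₁

lemma natCast_mul_mul_one_sub_pow_le_one : n * (x * (1 - x) ^ n) ≤ 1 := by
  calc n * (x * (1 - x) ^ n) ≤ n * x * exp (-(n * x)) := by
        rw [← mul_assoc]; gcongr; exact one_sub_pow_le_exp_neg_mul hx₁ n
    _ ≤ 1 := mul_exp_neg_le_one _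

lemma natCast_mul_mul_one_sub_pow_le_natCast_mul : n * (x * (1 - x) ^ n) ≤ n * x := by
  gcongr
  exact mul_le_of_le_one_right hx₀ (pow_le_one₀ (by linarith) (by linarith))

lemma natCast_mul_mul_one_sub_pow_mul_le_four : n * (x * (1 - x) ^ n) * (n * x) ≤ 4 := by
  calc n * (x * (1 - x) ^ n) * (n * x) ≤ (n * x) ^ 2 * exp (-(n * x)) := by
        rw [show (n : ℝ) * (x * (1 - x) ^ n) * (n * x) = (n * x) ^ 2 * (1 - x) ^ n by ring]
        gcongr; exact one_sub_pow_le_exp_neg_mul hx₁ n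
    _ ≤ 4 := sq_mul_exp_neg_le_four (by positivity)

end TailTerm

section GeometricDecay

variable {x g : ℕ → ℝ} {ρ : ℝ}

lemma le_pow_mul_of_succ_le (hρ : 0 ≤ ρ) (hx : ∀ k, x (k + 1) ≤ ρ * x k) (k j : ℕ) :
    x (k + j) ≤ ρ ^ j * x k :=
  le_geom (u := fun j => x (k + j)) hρ j fun i _ => hx (k + i)

theorem tsum_le_of_le_of_mul_le (hρ₀ : 0 ≤ ρ) (hρ₁ : ρ < 1) {C : ℝ} (hC : 0 ≤ C)
    (hx : ∀ k, x (k + 1) ≤ ρ * x k) (hg₀ : ∀ k, 0 ≤ g k) (hgx : ∀ k, g k ≤ x k)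
    (hgC : ∀ k, g k * x k ≤ C) : ∑' k, g k ≤ (C + 1) / (1 - ρ) := by
  have hdecay := le_pow_mul_of_succ_le hρ₀ hx
  have hgeom := summable_geometric_of_lt_one hρ₀ hρ₁
  have hg : Summable g := .of_nonneg_of_le hg₀
    (fun k => (hgx k).trans (by simpa [mul_comm] using hdecay 0 k)) (hgeom.mul_left (x 0))
  have hex : ∃ m, x m ≤ 1 := by
    have hlim := (tendsto_pow_atTop_nhds_zero_of_lt_one hρ₀ hρ₁).mul_const (x 0)
    rw [zero_mul] at hlim
    obtain ⟨m, hm⟩ := (hlim.eventually_le_const one_pos).exists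
    exact ⟨m, by simpa using (hdecay 0 m).trans hm⟩
  set m := Nat.find hex
  have hm : x m ≤ 1 := Nat.find_spec hex
  have head : ∑ k ∈ range m, g k ≤ C / (1 - ρ) := by
    have hterm : ∀ k ∈ range m, g k ≤ C * ρ ^ (m - 1 - k) := fun k hk => by
      have hk := mem_range.mp hk
      have h₁ : 1 < x (m - 1) := not_le.mp (Nat.find_min hex (by omega))
      have h₂ : x (m - 1) ≤ ρ ^ (m - 1 - k) * x k := by
        simpa [show k + (m - 1 - k) = m - 1 by omega] using hdecay k (m - 1 - k)
      nlinarith [hgC k, hg₀ k, pow_nonneg hρ₀ (m - 1 - k)]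
    calc ∑ k ∈ range m, g k ≤ ∑ k ∈ range m, C * ρ ^ (m - 1 - k) := sum_le_sum hterm
      _ = C * ∑ k ∈ Ico 0 m, ρ ^ k := by rw [← mul_sum, sum_range_reflect (ρ ^ ·), range_eq_Ico]
      _ ≤ C * (ρ ^ 0 / (1 - ρ)) := by gcongr; exact geom_sum_Ico_le_of_lt_one hρ₀ hρ₁
      _ = C / (1 - ρ) := by ring
  have tail : ∑' i, g (i + m) ≤ 1 / (1 - ρ) := by
    rw [one_div, ← tsum_geometric_of_lt_one hρ₀ hρ₁]
    refine hg.comp_injective (add_left_injective m) |>.tsum_le_tsum (fun i => ?_) hgeom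
    calc g (i + m) ≤ x (m + i) := add_comm i m ▸ hgx _
      _ ≤ ρ ^ i * x m := hdecay m i
      _ ≤ ρ ^ i := mul_le_of_le_one_right (pow_nonneg hρ₀ i) hm
  rw [← hg.sum_add_tsum_nat_add m, add_div]
  exact add_le_add head tail

end GeometricDecay

theorem tailIndex_le_of_succ_le {p : ℕ → ℝ} (hp₀ : ∀ k, 0 ≤ p k) (hp₁ : ∀ k, p k ≤ 1)
    (hp : Summable p) {ρ : ℝ} (hρ₀ : 0 ≤ ρ) (hρ₁ : ρ < 1) {k₁ : ℕ}
    (hratio : ∀ k ≥ k₁, p (k + 1) ≤ ρ * p k) (n : ℕ) :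
    tailIndex p n ≤ k₁ + 5 / (1 - ρ) := by
  set f : ℕ → ℝ := fun k => n * (p k * (1 - p k) ^ n)
  have hf₀ : ∀ k, 0 ≤ f k := fun k =>
    mul_nonneg n.cast_nonneg (mul_nonneg (hp₀ k) (pow_nonneg (by linarith [hp₁ k]) n))
  have hfp : ∀ k, f k ≤ n * p k := fun k =>
    natCast_mul_mul_one_sub_pow_le_natCast_mul (hp₀ k) (hp₁ k) n
  have hf : Summable f := .of_nonneg_of_le hf₀ hfp (hp.mul_left (n : ℝ))
  have head : ∑ k ∈ range k₁, f k ≤ k₁ := by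
    simpa using sum_le_sum fun k (_ : k ∈ range k₁) =>
      natCast_mul_mul_one_sub_pow_le_one (hp₀ k) (hp₁ k) n
  have tail : ∑' i, f (i + k₁) ≤ (4 + 1) / (1 - ρ) :=
    tsum_le_of_le_of_mul_le (x := fun i => n * p (i + k₁)) hρ₀ hρ₁ (by norm_num)
      (fun i => by
        rw [Nat.add_right_comm, mul_left_comm]
        exact mul_le_mul_of_nonneg_left (hratio _ (by omega)) n.cast_nonneg)
      (fun i => hf₀ _) (fun i => hfp _)
      (fun i => natCast_mul_mul_one_sub_pow_mul_le_four (hp₀ _) (hp₁ _) n)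
  rw [tailIndex, ← tsum_mul_left, ← hf.sum_add_tsum_nat_add k₁]
  norm_num at tail
  linarith

lemma eventually_rpow_mul_exp_succ_le {c : ℝ} (hc : 0 ≤ c) (r : ℝ) {lam : ℝ} (hlam : 0 < lam) :
    ∀ᶠ k : ℕ in atTop, c * ((k + 1 : ℕ) : ℝ) ^ r * exp (-lam * ((k + 1 : ℕ) : ℝ)) ≤
      exp (-(lam / 2)) * (c * (k : ℝ) ^ r * exp (-lam * k)) := by
  have hlim : Tendsto (fun k : ℕ => (1 + 1 / (k : ℝ)) ^ r) atTop (𝓝 1) := by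
    simpa using (tendsto_one_div_atTop_nhds_zero_nat.const_add 1).rpow_const (.inl (by norm_num))
  filter_upwards [hlim.eventually_le_const (one_lt_exp_iff.mpr (half_pos hlam)),
    eventually_ge_atTop 1] with k hk hk₁
  have hk₀ : (0 : ℝ) < k := by exact_mod_cast hk₁
  have hsplit : ((k + 1 : ℕ) : ℝ) ^ r = (k : ℝ) ^ r * (1 + 1 / (k : ℝ)) ^ r := by
    rw [← mul_rpow hk₀.le (by positivity)]
    congr 1
    field_simp
    push_cast
    ring
  have hexp : exp (-(lam / 2)) = exp (lam / 2) * exp (-lam) := by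
    rw [← exp_add]; ring_nf
  rw [hsplit, hexp]
  push_cast
  rw [show -lam * ((k : ℝ) + 1) = -lam * k + -lam by ring, exp_add]
  have : 0 ≤ c * (k : ℝ) ^ r * exp (-lam * k) := by positivity
  calc c * ((k : ℝ) ^ r * (1 + 1 / (k : ℝ)) ^ r) * (exp (-lam * k) * exp (-lam))
      = c * (k : ℝ) ^ r * exp (-lam * k) * ((1 + 1 / (k : ℝ)) ^ r * exp (-lam)) := by ring
    _ ≤ c * (k : ℝ) ^ r * exp (-lam * k) * (exp (lam / 2) * exp (-lam)) := by gcongr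
    _ = exp (lam / 2) * exp (-lam) * (c * (k : ℝ) ^ r * exp (-lam * k)) := by ring

lemma mul_exp_neg_mul_succ_sq_le {b lam : ℝ} (hb : 0 ≤ b) (hlam : 0 ≤ lam) (k : ℕ) :
    b * exp (-lam * ((k + 1 : ℕ) : ℝ) ^ 2) ≤ exp (-lam) * (b * exp (-lam * (k : ℝ) ^ 2)) := by
  rw [mul_left_comm, ← exp_add]
  gcongr
  push_cast
  nlinarith [mul_nonneg hlam k.cast_nonneg]

theorem stmt12_general (p : ℕ → ℝ) (hp : ∀ k, 0 < p k) (hsum : ∑' k, p k = 1)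
    (lam r a b c : ℝ) (hlam : 0 < lam) (ha : 0 < a) (hb : 0 < b) (hc : 0 < c)
    (k₀ : ℕ)
    (hform :
      (∀ k : ℕ, k₀ ≤ k → p k = a * Real.exp (-lam * (k : ℝ))) ∨
      (∀ k : ℕ, k₀ ≤ k → p k = b * Real.exp (-lam * (k : ℝ) ^ 2)) ∨
      (∀ k : ℕ, k₀ ≤ k → p k = c * (k : ℝ) ^ r * Real.exp (-lam * (k : ℝ)))) :
    {k | 0 < p k}.Infinite ∧ ∃ u : ℝ, 0 < u ∧ ∀ n : ℕ, tailIndex p n ≤ u := by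
  refine ⟨Set.eq_univ_of_forall hp ▸ Set.infinite_univ, ?_⟩
  have hs : Summable p := by
    by_contra h
    simp [tsum_eq_zero_of_not_summable h] at hsum
  have hp₁ : ∀ k, p k ≤ 1 := fun k => hsum ▸ hs.le_tsum k fun j _ => (hp j).le
  obtain ⟨ρ, hρ₀, hρ₁, hratio⟩ :
      ∃ ρ, 0 ≤ ρ ∧ ρ < 1 ∧ ∀ᶠ k in atTop, p (k + 1) ≤ ρ * p k := by
    have hhalf : exp (-(lam / 2)) < 1 := exp_lt_one_iff.mpr (by linarith)
    rcases hform with h | h | h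
    · refine ⟨_, (exp_pos _).le, hhalf, ?_⟩
      filter_upwards [eventually_rpow_mul_exp_succ_le ha.le 0 hlam, eventually_ge_atTop k₀]
        with k hk hk₀
      simpa [h k hk₀, h (k + 1) (by omega)] using hk
    · refine ⟨_, (exp_pos _).le, exp_lt_one_iff.mpr (neg_lt_zero.mpr hlam), ?_⟩
      filter_upwards [eventually_ge_atTop k₀] with k hk₀
      rw [h k hk₀, h (k + 1) (by omega)]
      exact mul_exp_neg_mul_succ_sq_le hb.le hlam.le k
    · refine ⟨_, (exp_pos _).le, hhalf, ?_⟩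
      filter_upwards [eventually_rpow_mul_exp_succ_le hc.le r hlam, eventually_ge_atTop k₀]
        with k hk hk₀
      rwa [h k hk₀, h (k + 1) (by omega)]
  obtain ⟨k₁, hk₁⟩ := eventually_atTop.mp hratio
  have : 0 < 1 - ρ := sub_pos.mpr hρ₁
  exact ⟨k₁ + 5 / (1 - ρ), by positivity,
    tailIndex_le_of_succ_le (fun k => (hp k).le) hp₁ hs hρ₀ hρ₁ hk₁⟩

/-- Any distribution with tail `p_k = a e^(−λk)`, `p_k = b e^(−λk²)`, or
`p_k = c k^r e^(−λk)` (for all `k ≥ k₀`, with `λ > 0`, `r ∈ ℝ`, `a, b, c > 0`)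
is in Domain 1: its effective cardinality is infinite and `t_n` is bounded
above uniformly in `n`. -/
theorem stmt12 (p : ℕ → ℝ) (hp : ∀ k, 0 < p k) (hsum : ∑' k, p k = 1)
    (lam r a b c : ℝ) (hlam : 0 < lam) (ha : 0 < a) (hb : 0 < b) (hc : 0 < c)
    (k₀ : ℕ) (hk₀ : 1 ≤ k₀)
    (hform :
      (∀ k : ℕ, k₀ ≤ k → p k = a * Real.exp (-lam * (k : ℝ))) ∨
      (∀ k : ℕ, k₀ ≤ k → p k = b * Real.exp (-lam * (k : ℝ) ^ 2)) ∨
      (∀ k : ℕ, k₀ ≤ k → p k = c * (k : ℝ) ^ r * Real.exp (-lam * (k : ℝ)))) :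
    {k | 0 < p k}.Infinite ∧ ∃ u : ℝ, 0 < u ∧ ∀ n : ℕ, tailIndex p n ≤ u :=
  stmt12_general p hp hsum lam r a b c hlam ha hb hc k₀ hform
end
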